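/- Let n ≥ 1 and define D : {(m1,m2) ∈ ℕ × ℕ : m1 + m2 ≤ n} → ℝ by D(m1, m2) = (1/n^2)·(2·m1^2 + m2^2 + 2·m1·m2 − 2·n·m1 − n·m2 + 2·n^2). Then D is minimized at (m1, m2) = (⌊n/2⌋, 0) and at (m1, m2) = (⌈n/2⌉, 0). -/
import Mathlib

lemma aux_floor (n : ℕ) (x : ℤ) :
    ((n / 2 : ℕ) : ℤ) ^ 2 - n * ((n / 2 : ℕ) : ℤ) ≤ x ^ 2 - n * x := by
  have h1 : 2 * (n / 2) ≤ n := by omega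
  have h2 : n ≤ 2 * (n / 2) + 1 := by omega
  have hk1 : 2 * ((n / 2 : ℕ) : ℤ) ≤ (n : ℤ) := by exact_mod_cast h1
  have hk2 : (n : ℤ) ≤ 2 * ((n / 2 : ℕ) : ℤ) + 1 := by exact_mod_cast h2
  rcases le_or_gt x ((n / 2 : ℕ) : ℤ) with h | h
  · nlinarith
  · have h' : ((n / 2 : ℕ) : ℤ) + 1 ≤ x := h
    nlinarith

lemma aux_ceil (n : ℕ) (x : ℤ) :
    (((n + 1) / 2 : ℕ) : ℤ) ^ 2 - n * (((n + 1) / 2 : ℕ) : ℤ) ≤ x ^ 2 - n * x := by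
  have h1 : n ≤ 2 * ((n + 1) / 2) := by omega
  have h2 : 2 * ((n + 1) / 2) ≤ n + 1 := by omega
  have hk1 : (n : ℤ) ≤ 2 * (((n + 1) / 2 : ℕ) : ℤ) := by exact_mod_cast h1
  have hk2 : 2 * (((n + 1) / 2 : ℕ) : ℤ) ≤ (n : ℤ) + 1 := by exact_mod_cast h2
  rcases le_or_gt x (((n + 1) / 2 : ℕ) : ℤ) with h | h
  · rcases h.lt_or_eq with h' | h'
    · have h'' : x ≤ (((n + 1) / 2 : ℕ) : ℤ) - 1 := by omega
      nlinarith
    · rw [h']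
  · have h' : (((n + 1) / 2 : ℕ) : ℤ) + 1 ≤ x := h
    nlinarith

/-- For `n ≥ 1`, the social delay of the atomic Braess network
`D (m1, m2) = (1/n²)·(2·m1² + m2² + 2·m1·m2 − 2·n·m1 − n·m2 + 2·n²)` is minimized over
`{(m1, m2) ∈ ℕ × ℕ : m1 + m2 ≤ n}` at `(⌊n/2⌋, 0)` and at `(⌈n/2⌉, 0)`. -/
theorem stmt4 (n : ℕ) (hn : 1 ≤ n) (D : ℕ → ℕ → ℝ)
    (hD : ∀ m1 m2, D m1 m2 = (1 / (n : ℝ) ^ 2) *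
      (2 * (m1 : ℝ) ^ 2 + (m2 : ℝ) ^ 2 + 2 * (m1 : ℝ) * (m2 : ℝ)
        - 2 * (n : ℝ) * (m1 : ℝ) - (n : ℝ) * (m2 : ℝ) + 2 * (n : ℝ) ^ 2)) :
    ∀ m1 m2, m1 + m2 ≤ n → D (n / 2) 0 ≤ D m1 m2 ∧ D ((n + 1) / 2) 0 ≤ D m1 m2 := by
  intro m1 m2 _
  have hnpos : (0 : ℝ) < (n : ℝ) ^ 2 := by positivity
  have hpos : (0 : ℝ) ≤ 1 / (n : ℝ) ^ 2 := by positivity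
  have A1 := aux_floor n m1
  have A2 := aux_floor n (m1 + m2 : ℕ)
  have B1 := aux_ceil n m1
  have B2 := aux_ceil n (m1 + m2 : ℕ)
  have A1' : ((n / 2 : ℕ) : ℝ) ^ 2 - n * ((n / 2 : ℕ) : ℝ) ≤ (m1 : ℝ) ^ 2 - n * m1 := by
    exact_mod_cast A1
  have A2' : ((n / 2 : ℕ) : ℝ) ^ 2 - n * ((n / 2 : ℕ) : ℝ)
      ≤ ((m1 : ℝ) + m2) ^ 2 - n * ((m1 : ℝ) + m2) := by
    have h : ((n / 2 : ℕ) : ℝ) ^ 2 - n * ((n / 2 : ℕ) : ℝ)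
        ≤ ((m1 + m2 : ℕ) : ℝ) ^ 2 - n * ((m1 + m2 : ℕ) : ℝ) := by exact_mod_cast A2
    rw [Nat.cast_add] at h; exact h
  have B1' : (((n + 1) / 2 : ℕ) : ℝ) ^ 2 - n * (((n + 1) / 2 : ℕ) : ℝ)
      ≤ (m1 : ℝ) ^ 2 - n * m1 := by exact_mod_cast B1
  have B2' : (((n + 1) / 2 : ℕ) : ℝ) ^ 2 - n * (((n + 1) / 2 : ℕ) : ℝ)
      ≤ ((m1 : ℝ) + m2) ^ 2 - n * ((m1 : ℝ) + m2) := by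
    have h : (((n + 1) / 2 : ℕ) : ℝ) ^ 2 - n * (((n + 1) / 2 : ℕ) : ℝ)
        ≤ ((m1 + m2 : ℕ) : ℝ) ^ 2 - n * ((m1 + m2 : ℕ) : ℝ) := by exact_mod_cast B2
    rw [Nat.cast_add] at h; exact h
  constructor
  · rw [hD, hD]
    apply mul_le_mul_of_nonneg_left _ hpos
    push_cast
    nlinarith [A1', A2']
  · rw [hD, hD]
    apply mul_le_mul_of_nonneg_left _ hpos
    push_cast
    nlinarith [B1', B2']
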